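/- arXiv:2502.15960 — 2 statements merged into one kernel-verified Lean document; each statement's English description precedes it below -/
import Mathlib

section
/- Let p > 3 be prime and let C be a finite set of nonzero Markoff triples mod p closed under the first-coordinate Vieta involution. Then the sum over x ∈ C of y1(x) equals |C|/2 in F_p, where y1(x) = x1/(3*x2*x3) if x1*x2*x3 ≠ 0, y1(x) = 0 if x1 = 0, and y1(x) = 1/2 otherwise. -/
def Markoff (p : ℕ) (x : ZMod p × ZMod p × ZMod p) : Prop :=
  x.1^2 + x.2.1^2 + x.2.2^2 = 3 * x.1 * x.2.1 * x.2.2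

def vieta1 (p : ℕ) (x : ZMod p × ZMod p × ZMod p) : ZMod p × ZMod p × ZMod p :=
  (3 * x.2.1 * x.2.2 - x.1, x.2.1, x.2.2)

def vieta2 (p : ℕ) (x : ZMod p × ZMod p × ZMod p) : ZMod p × ZMod p × ZMod p :=
  (x.1, 3 * x.1 * x.2.2 - x.2.1, x.2.2)

def vieta3 (p : ℕ) (x : ZMod p × ZMod p × ZMod p) : ZMod p × ZMod p × ZMod p :=
  (x.1, x.2.1, 3 * x.1 * x.2.1 - x.2.2)

def y1 (p : ℕ) [Fact p.Prime] (x : ZMod p × ZMod p × ZMod p) : ZMod p :=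
  if x.1 * x.2.1 * x.2.2 ≠ 0 then x.1 / (3 * x.2.1 * x.2.2)
  else if x.1 = 0 then 0 else 1/2

def y2 (p : ℕ) [Fact p.Prime] (x : ZMod p × ZMod p × ZMod p) : ZMod p :=
  if x.1 * x.2.1 * x.2.2 ≠ 0 then x.2.1 / (3 * x.1 * x.2.2)
  else if x.2.1 = 0 then 0 else 1/2

def y3 (p : ℕ) [Fact p.Prime] (x : ZMod p × ZMod p × ZMod p) : ZMod p :=
  if x.1 * x.2.1 * x.2.2 ≠ 0 then x.2.2 / (3 * x.1 * x.2.1)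
  else if x.2.2 = 0 then 0 else 1/2

/-! The Vieta involution pairs `x` with `vieta1 p x`, and on nonzero Markoff triples
`y1 x + y1 (vieta1 x) = 1`: when `x₂x₃ ≠ 0` both values are given by the formula
`x₁ / (3x₂x₃)` (even when a first coordinate vanishes) and the numerators add up to `3x₂x₃`;
when `x₂x₃ = 0` the Markoff equation forces `x₁ ≠ 0`, so both values are `1/2`.
Summing `y1 x + y1 (vieta1 x) = 1` over `C`, which `vieta1` permutes, gives `2 ∑ y1 = |C|`. -/

theorem ZMod.natCast_ne_zero_of_pos_of_lt {n p : ℕ} (hn : 0 < n) (hnp : n < p) :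
    (n : ZMod p) ≠ 0 := by
  rw [Ne, ZMod.natCast_eq_zero_iff]
  exact Nat.not_dvd_of_pos_of_lt hn hnp

theorem Finset.sum_eq_card_div_two_of_add_comp_eq_one {α K : Type*} [Field K]
    (h2 : (2 : K) ≠ 0) (s : Finset α) (σ : α → α) (f : α → K)
    (hσ : ∀ x ∈ s, σ x ∈ s) (hσσ : ∀ x ∈ s, σ (σ x) = x)
    (hf : ∀ x ∈ s, f x + f (σ x) = 1) :
    ∑ x ∈ s, f x = (s.card : K) / 2 := by
  have hcomp : ∑ x ∈ s, f (σ x) = ∑ x ∈ s, f x :=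
    Finset.sum_nbij' σ σ hσ hσ hσσ hσσ fun _ _ => rfl
  have htwice : 2 * ∑ x ∈ s, f x = s.card := by
    calc 2 * ∑ x ∈ s, f x = ∑ x ∈ s, (f x + f (σ x)) := by
          rw [Finset.sum_add_distrib, hcomp, two_mul]
      _ = s.card := by simp [Finset.sum_congr rfl hf]
  rw [eq_div_iff h2, mul_comm, htwice]

section Markoff

variable {p : ℕ}

theorem vieta1_vieta1 (x : ZMod p × ZMod p × ZMod p) : vieta1 p (vieta1 p x) = x := by
  simp [vieta1]

theorem Markoff.eq_zero_of_fst_eq_zero_of_mul_eq_zero [Fact p.Prime]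
    {x : ZMod p × ZMod p × ZMod p} (hx : Markoff p x) (h₁ : x.1 = 0)
    (h₂₃ : x.2.1 * x.2.2 = 0) : x = 0 := by
  obtain ⟨a, b, c⟩ := x
  simp only [Markoff] at hx h₁ h₂₃
  subst h₁
  rcases mul_eq_zero.mp h₂₃ with rfl | rfl
  · have hc : c ^ 2 = 0 := by linear_combination hx
    simp [pow_eq_zero_iff two_ne_zero |>.mp hc]
  · have hb : b ^ 2 = 0 := by linear_combination hx
    simp [pow_eq_zero_iff two_ne_zero |>.mp hb]

theorem y1_of_mul_ne_zero [Fact p.Prime] {x : ZMod p × ZMod p × ZMod p}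
    (h₂₃ : x.2.1 * x.2.2 ≠ 0) : y1 p x = x.1 / (3 * x.2.1 * x.2.2) := by
  by_cases h₁ : x.1 = 0
  · simp [y1, h₁]
  · have : x.1 * x.2.1 * x.2.2 ≠ 0 := by rw [mul_assoc]; exact mul_ne_zero h₁ h₂₃
    simp [y1, this]

theorem y1_of_mul_eq_zero [Fact p.Prime] {x : ZMod p × ZMod p × ZMod p}
    (h₁ : x.1 ≠ 0) (h₂₃ : x.2.1 * x.2.2 = 0) : y1 p x = 1 / 2 := by
  have : x.1 * x.2.1 * x.2.2 = 0 := by rw [mul_assoc, h₂₃, mul_zero]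
  simp [y1, this, h₁]

theorem y1_add_y1_vieta1 [Fact p.Prime] (h2 : (2 : ZMod p) ≠ 0) (h3 : (3 : ZMod p) ≠ 0)
    {x : ZMod p × ZMod p × ZMod p} (hx : Markoff p x) (hx0 : x ≠ 0) :
    y1 p x + y1 p (vieta1 p x) = 1 := by
  by_cases h₂₃ : x.2.1 * x.2.2 = 0
  · have h₁ : x.1 ≠ 0 := fun h₁ => hx0 (hx.eq_zero_of_fst_eq_zero_of_mul_eq_zero h₁ h₂₃)
    have h₁' : (vieta1 p x).1 ≠ 0 := by
      simpa [vieta1, mul_assoc, h₂₃] using h₁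
    rw [y1_of_mul_eq_zero h₁ h₂₃, y1_of_mul_eq_zero h₁' h₂₃]
    field_simp
    norm_num
  · have h3bc : 3 * x.2.1 * x.2.2 ≠ 0 := by rw [mul_assoc]; exact mul_ne_zero h3 h₂₃
    rw [y1_of_mul_ne_zero h₂₃, y1_of_mul_ne_zero (x := vieta1 p x) h₂₃]
    simp only [vieta1]
    rw [← add_div, add_sub_cancel, div_self h3bc]

end Markoff

theorem stmt5 (p : ℕ) [Fact p.Prime] (hp : 3 < p)
    (C : Finset (ZMod p × ZMod p × ZMod p))
    (hM : ∀ x ∈ C, Markoff p x) (hnz : ∀ x ∈ C, x ≠ (0, 0, 0))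
    (hclosed : ∀ x ∈ C, vieta1 p x ∈ C) :
    ∑ x ∈ C, y1 p x = (C.card : ZMod p) / 2 := by
  have h2 : (2 : ZMod p) ≠ 0 := by
    exact_mod_cast ZMod.natCast_ne_zero_of_pos_of_lt (n := 2) two_pos (by omega)
  have h3 : (3 : ZMod p) ≠ 0 := by
    exact_mod_cast ZMod.natCast_ne_zero_of_pos_of_lt (n := 3) three_pos hp
  exact Finset.sum_eq_card_div_two_of_add_comp_eq_one h2 C (vieta1 p) (y1 p) hclosed
    (fun x _ => vieta1_vieta1 x) (fun x hx => y1_add_y1_vieta1 h2 h3 (hM x hx) (hnz x hx))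
end

section
/- Let p > 3 be prime. The total number of nonzero solutions in F_p^3 to x1^2 + x2^2 + x3^2 = 3*x1*x2*x3 is divisible by p. -/
/-!
Count modulo `p`. For fixed `x, y` the equation is a monic quadratic in `z`, so the number of
solutions `z` is the number of square roots of its discriminant `(9x² - 4) y² - 4x²`, which by
Euler's criterion is `1 + D^((q-1)/2)` in `𝔽_q`. Summing a polynomial of degree `< q - 1` over
`𝔽_q` gives `0`, so `∑_y (A y² + B)^((q-1)/2) = -A^((q-1)/2)`; applying this twice the total count
is `≡ 9^((q-1)/2) = 1`, and removing the origin leaves a multiple of `p`.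
-/

open Finset

namespace FiniteField

variable {K : Type*} [Field K] [Fintype K]

local notation "q" => Fintype.card K

theorem sum_pow_card_sub_one_eq_neg_one : ∑ x : K, x ^ (q - 1) = -1 := by
  classical
  have hq : q - 1 ≠ 0 := by have := Fintype.one_lt_card (α := K); omega
  rw [← sum_erase_add _ _ (mem_univ 0), zero_pow hq, add_zero,
    sum_congr rfl fun x hx => pow_card_sub_one_eq_one x (ne_of_mem_erase hx), sum_const,
    card_erase_of_mem (mem_univ _), card_univ, nsmul_one, Nat.cast_pred Fintype.card_pos,
    cast_card_eq_zero, zero_sub]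

theorem two_mul_card_div_two (hK : ringChar K ≠ 2) : 2 * (q / 2) = q - 1 := by
  have := odd_card_of_char_ne_two hK; omega

/-- Only the top binomial term survives: `∑ y, y ^ (2 * k)` vanishes for `2 * k < q - 1`. -/
theorem sum_quadratic_pow_card_div_two (hK : ringChar K ≠ 2) (a b : K) :
    ∑ y : K, (a * y ^ 2 + b) ^ (q / 2) = -a ^ (q / 2) := by
  set m := q / 2
  have hm : 2 * m = q - 1 := two_mul_card_div_two hK
  calc ∑ y : K, (a * y ^ 2 + b) ^ m
      = ∑ k ∈ range (m + 1), (∑ y : K, y ^ (2 * k)) * (a ^ k * b ^ (m - k) * m.choose k) := by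
        simp_rw [add_pow, sum_mul]
        rw [sum_comm]
        refine sum_congr rfl fun y _ => sum_congr rfl fun k _ => ?_
        rw [mul_pow, pow_mul]
        ring
    _ = (∑ y : K, y ^ (2 * m)) * (a ^ m * b ^ (m - m) * m.choose m) := by
        refine sum_eq_single m (fun k hk hkm => ?_) (by simp)
        rw [sum_pow_lt_card_sub_one K _ (by rw [mem_range] at hk; omega), zero_mul]
    _ = -a ^ m := by
        rw [hm, sum_pow_card_sub_one_eq_neg_one]
        simp

variable [DecidableEq K]

theorem cast_card_sq_eq (hK : ringChar K ≠ 2) (a : K) :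
    (#{w : K | w ^ 2 = a} : K) = 1 + a ^ (q / 2) := by
  have h := congrArg (Int.cast : ℤ → K) (quadraticChar_card_sqrts hK a)
  rw [Set.toFinset_ofPred] at h
  push_cast at h
  rw [h, quadraticChar_eq_pow_of_char_ne_two' hK, add_comm]

end FiniteField

theorem card_quadratic_roots_eq_card_sq_eq_discrim {K : Type*} [Field K] [Fintype K]
    [DecidableEq K] [NeZero (2 : K)] {a : K} (ha : a ≠ 0) (b c : K) :
    #{x : K | a * (x * x) + b * x + c = 0} = #{s : K | s ^ 2 = discrim a b c} :=
  card_equiv ((Equiv.mulLeft₀ (2 * a) (mul_ne_zero two_ne_zero ha)).trans (Equiv.addRight b))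
    fun x => by simp [quadratic_eq_zero_iff_discrim_eq_sq ha, eq_comm]

theorem card_filter_prod_prod {α β γ : Type*} [Fintype α] [Fintype β] [Fintype γ]
    (P : α × β × γ → Prop) [DecidablePred P] :
    #{v | P v} = ∑ x : α, ∑ y : β, #{z | P (x, y, z)} := by
  simp only [card_filter, Fintype.sum_prod_type]

section Markoff

open FiniteField

variable {K : Type*} [Field K] [Fintype K] [DecidableEq K]

theorem card_markoff_fiber [NeZero (2 : K)] (x y : K) :
    #{z : K | x ^ 2 + y ^ 2 + z ^ 2 = 3 * x * y * z}
      = #{s : K | s ^ 2 = (9 * x ^ 2 - 4) * y ^ 2 + -(4 * x ^ 2)} := by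
  have hdiscrim :
      discrim 1 (-(3 * x * y)) (x ^ 2 + y ^ 2) = (9 * x ^ 2 - 4) * y ^ 2 + -(4 * x ^ 2) := by
    rw [discrim]; ring
  rw [← hdiscrim, ← card_quadratic_roots_eq_card_sq_eq_discrim one_ne_zero]
  congr! 2 with z
  constructor <;> intro h <;> linear_combination h

theorem cast_card_markoff (hK : ringChar K ≠ 2) (h3 : (3 : K) ≠ 0) :
    (#{v : K × K × K | v.1 ^ 2 + v.2.1 ^ 2 + v.2.2 ^ 2 = 3 * v.1 * v.2.1 * v.2.2} : K) = 1 := by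
  have : NeZero (2 : K) := ⟨Ring.two_ne_zero hK⟩
  calc (#{v : K × K × K | v.1 ^ 2 + v.2.1 ^ 2 + v.2.2 ^ 2 = 3 * v.1 * v.2.1 * v.2.2} : K)
      = ∑ x : K, ∑ y : K,
          (1 + ((9 * x ^ 2 - 4) * y ^ 2 + -(4 * x ^ 2)) ^ (Fintype.card K / 2)) := by
        simp only [card_filter_prod_prod, Nat.cast_sum, card_markoff_fiber, cast_card_sq_eq hK]
    _ = ∑ x : K, -(9 * x ^ 2 + -4) ^ (Fintype.card K / 2) := by
        simp only [sum_add_distrib, sum_const, card_univ, nsmul_one, cast_card_eq_zero, zero_add,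
          sum_quadratic_pow_card_div_two hK, sub_eq_add_neg]
    _ = 3 ^ (2 * (Fintype.card K / 2)) := by
        rw [sum_neg_distrib, sum_quadratic_pow_card_div_two hK, neg_neg, pow_mul]
        norm_num
    _ = 1 := by rw [two_mul_card_div_two hK, pow_card_sub_one_eq_one _ h3]

end Markoff

theorem stmt12 (p : ℕ) [Fact p.Prime] (hp : 3 < p) :
    p ∣ (Finset.univ.filter (fun x : ZMod p × ZMod p × ZMod p =>
      x ≠ (0, 0, 0) ∧
      x.1^2 + x.2.1^2 + x.2.2^2 = 3 * x.1 * x.2.1 * x.2.2)).card := by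
  have hchar : ringChar (ZMod p) ≠ 2 := by rw [ZMod.ringChar_zmod_n]; omega
  have h3 : ((3 : ℕ) : ZMod p) ≠ 0 := by
    rw [Ne, ZMod.natCast_eq_zero_iff]
    exact fun h => absurd (Nat.le_of_dvd three_pos h) (by omega)
  have hsplit : #{x : ZMod p × ZMod p × ZMod p | x ≠ (0, 0, 0) ∧
      x.1^2 + x.2.1^2 + x.2.2^2 = 3 * x.1 * x.2.1 * x.2.2} + 1
      = #{x : ZMod p × ZMod p × ZMod p | x.1^2 + x.2.1^2 + x.2.2^2 = 3 * x.1 * x.2.1 * x.2.2} := by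
    rw [← filter_filter, filter_ne', filter_erase, card_erase_add_one (by simp)]
  rw [← ZMod.natCast_eq_zero_iff, ← add_left_inj 1, ← Nat.cast_add_one, hsplit,
    cast_card_markoff hchar (by exact_mod_cast h3), zero_add]
end
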